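/- arXiv:2210.08138 — 5 statements merged into one kernel-verified Lean document; each statement's English description precedes it below -/
import Mathlib

section
/- If k ∈ P and I ⊆ [0,1] is an interval with 0.01|I| ≤ |E_k ∩ I| ≤ 0.1|I|, then either |E_{k−1} ∩ I| > 0.8|I| or |E_{k+1} ∩ I| > 0.8|I|. -/
open MeasureTheory Set

/-- One-dimensional Lebesgue measure of a set, as a real number. -/
noncomputable def len (A : Set ℝ) : ℝ := (volume A).toReal

/-- The discretized level set `E_k = {s ∈ [0,1] | kδ ≤ g(s) ≤ (k+1)δ}`. -/
def lev (g : ℝ → ℝ) (δ : ℝ) (k : ℤ) : Set ℝ :=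
  {s ∈ Icc (0:ℝ) 1 | (k : ℝ) * δ ≤ g s ∧ g s ≤ ((k : ℝ) + 1) * δ}

/-- The neighbors `N_k = E_{k-1} ∪ E_k ∪ E_{k+1}`. -/
def nbr (g : ℝ → ℝ) (δ : ℝ) (k : ℤ) : Set ℝ :=
  lev g δ (k - 1) ∪ lev g δ k ∪ lev g δ (k + 1)

/-- The set of satisfied indices `𝒮`. -/
def sat (g : ℝ → ℝ) (δ : ℝ) : Set ℕ :=
  {k | ∃ a b : ℝ, 0 ≤ a ∧ a < b ∧ b ≤ 1 ∧
    len (lev g δ k ∩ Ioo a b) > 0.01 * (b - a) ∧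
    len ((Icc (0:ℝ) 1 \ nbr g δ k) ∩ Ioo a b) > 0.01 * (b - a)}

/-- The set `𝒫` of (triples of) unsatisfied indices. -/
def unsat (g : ℝ → ℝ) (δ : ℝ) : Set ℕ :=
  {k | k ∉ sat g δ ∧ k - 1 ∉ sat g δ ∧ k + 1 ∉ sat g δ}

/-!
Since `k ∉ 𝒮` and `E_k` fills at least `1%` of `I`, the complement of `N_k` fills at most `1%`
of `I`. (The strict inequalities in the definition of `𝒮` come from Lebesgue density: next to a
density point of `N_kᶜ` the set `E_k` is sparse, so cutting out a small interval around it leaves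
a piece of `I` on which both sets have density `> 1%`.) If neither `E_{k±1}` fills `80%` of `I`,
both fill at least `9%`; then `k + 1 ∉ 𝒮` forces `N_{k+1}ᶜ` to fill at most `1%` of `I`, although
it contains `E_{k-1}` up to the finite level set `{g = kδ}`.
-/

open Filter Topology

noncomputable def excess (c : ℝ) (S : Set ℝ) (s t : ℝ) : ℝ :=
  volume.real (S ∩ Ioo s t) - c * (t - s)

lemma volume_inter_Ioo_ne_top (S : Set ℝ) (s t : ℝ) : volume (S ∩ Ioo s t) ≠ ⊤ :=
  measure_ne_top_of_subset inter_subset_right measure_Ioo_lt_top.ne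

@[simp]
lemma excess_self (c : ℝ) (S : Set ℝ) (s : ℝ) : excess c S s s = 0 := by
  simp [excess]

lemma excess_add {c : ℝ} {S : Set ℝ} {s t u : ℝ} (hst : s ≤ t) (htu : t ≤ u) :
    excess c S s u = excess c S s t + excess c S t u := by
  rcases hst.eq_or_lt with rfl | hst
  · simp
  have hleft : S ∩ Ioo s u ∩ Iio t = S ∩ Ioo s t := by
    ext x
    simp only [mem_inter_iff, mem_Ioo, mem_Iio]
    exact ⟨fun ⟨⟨hx, hsx, _⟩, hxt⟩ => ⟨hx, hsx, hxt⟩,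
      fun ⟨hx, hsx, hxt⟩ => ⟨⟨hx, hsx, hxt.trans_le htu⟩, hxt⟩⟩
  have hright : (S ∩ Ioo s u) \ Iio t = S ∩ Ico t u := by
    ext x
    simp only [mem_inter_iff, Set.mem_sdiff, mem_Ioo, mem_Ico, mem_Iio, not_lt]
    exact ⟨fun ⟨⟨hx, _, hxu⟩, htx⟩ => ⟨hx, htx, hxu⟩,
      fun ⟨hx, htx, hxu⟩ => ⟨⟨hx, hst.trans_le htx, hxu⟩, htx⟩⟩
  have hsplit := measureReal_inter_add_sdiff (μ := volume) (s := S ∩ Ioo s u)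
    (measurableSet_Iio (a := t)) (volume_inter_Ioo_ne_top _ _ _)
  rw [hleft, hright,
    measureReal_congr (ae_eq_set_inter (ae_eq_refl S) Ioo_ae_eq_Ico.symm)] at hsplit
  unfold excess
  rw [← hsplit]
  ring

lemma lipschitzWith_measureReal_inter_Ioo (S : Set ℝ) (s : ℝ) :
    LipschitzWith 1 fun t => volume.real (S ∩ Ioo s t) := by
  refine LipschitzWith.of_le_add fun u t => ?_
  rcases le_total u t with h | h
  · exact le_add_of_le_of_nonneg (measureReal_mono
      (inter_subset_inter_right _ (Ioo_subset_Ioo_right h))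
      (volume_inter_Ioo_ne_top _ _ _)) dist_nonneg
  · calc volume.real (S ∩ Ioo s u) ≤ volume.real (S ∩ Ioo s t ∪ Icc t u) := by
          refine measureReal_mono (fun x ⟨hx, hsx, hxu⟩ => ?_)
            (measure_union_lt_top ?_ measure_Icc_lt_top).ne
          · rcases lt_or_ge x t with hxt | htx
            · exact Or.inl ⟨hx, hsx, hxt⟩
            · exact Or.inr ⟨htx, hxu.le⟩
          · exact (volume_inter_Ioo_ne_top S s t).lt_top
      _ ≤ volume.real (S ∩ Ioo s t) + volume.real (Icc t u) := measureReal_union_le _ _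
      _ = volume.real (S ∩ Ioo s t) + dist u t := by
          rw [Real.volume_real_Icc_of_le h, Real.dist_eq, abs_of_nonneg (sub_nonneg.2 h)]

lemma continuous_excess (c : ℝ) (S : Set ℝ) (s : ℝ) : Continuous (excess c S s) :=
  (lipschitzWith_measureReal_inter_Ioo S s).continuous.sub
    (continuous_const.mul (continuous_id.sub continuous_const))

lemma exists_nonpos_forall_Ioc_pos {F : ℝ → ℝ} (hF : Continuous F) {a b : ℝ} (hab : a ≤ b)
    (ha : F a ≤ 0) (hb : 0 < F b) : ∃ t₀ ∈ Ico a b, F t₀ ≤ 0 ∧ ∀ t ∈ Ioc t₀ b, 0 < F t := by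
  set T := Icc a b ∩ {t | F t ≤ 0}
  have hbdd : BddAbove T := bddAbove_Icc.mono inter_subset_left
  obtain ⟨⟨hat₀, ht₀b⟩, hFt₀⟩ : sSup T ∈ T :=
    (isClosed_Icc.inter (isClosed_le hF continuous_const)).csSup_mem ⟨a, ⟨le_rfl, hab⟩, ha⟩ hbdd
  refine ⟨sSup T, ⟨hat₀, ht₀b.lt_of_ne ?_⟩, hFt₀, fun t ht => ?_⟩
  · rintro h
    rw [h] at hFt₀
    exact (hFt₀.trans_lt hb).false
  · by_contra! hFt
    exact ht.1.not_ge (le_csSup hbdd ⟨⟨hat₀.trans ht.1.le, ht.2⟩, hFt⟩)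

lemma exists_Ioo_lt_measureReal_inter {B : Set ℝ} (hB : MeasurableSet B) {p q θ : ℝ}
    (hθ : θ < 1) (hpos : volume (B ∩ Ioo p q) ≠ 0) :
    ∃ s t, p < s ∧ s < t ∧ t < q ∧ θ * (t - s) < volume.real (B ∩ Ioo s t) := by
  set S := B ∩ Ioo p q
  have : (ae (volume.restrict S)).NeBot := ae_restrict_neBot.2 hpos
  obtain ⟨x, ⟨-, hpx, hxq⟩, hx⟩ := ((ae_restrict_mem (hB.inter measurableSet_Ioo)).and
    (Besicovitch.ae_tendsto_measure_inter_div volume S)).exists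
  have hdens : ∀ᶠ r in 𝓝[>] (0 : ℝ),
      ENNReal.ofReal θ < volume (S ∩ Metric.closedBall x r) / volume (Metric.closedBall x r) :=
    hx.eventually (eventually_gt_nhds (ENNReal.ofReal_lt_one.2 hθ))
  have hsmall : ∀ᶠ r in 𝓝[>] (0 : ℝ), r < min (x - p) (q - x) :=
    eventually_nhdsWithin_of_eventually_nhds
      (eventually_lt_nhds (lt_min (sub_pos.2 hpx) (sub_pos.2 hxq)))
  obtain ⟨r, hr, hrpq, hr0⟩ := (hdens.and (hsmall.and self_mem_nhdsWithin)).exists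
  have hr0 : (0 : ℝ) < r := hr0
  refine ⟨x - r, x + r, by linarith [min_le_left (x - p) (q - x)], by linarith,
    by linarith [min_le_right (x - p) (q - x)], ?_⟩
  have hball : volume (Metric.closedBall x r) = ENNReal.ofReal ((x + r) - (x - r)) := by
    rw [Real.volume_closedBall]; ring_nf
  have hlt : ENNReal.ofReal (θ * ((x + r) - (x - r))) < volume (B ∩ Ioo (x - r) (x + r)) := by
    calc ENNReal.ofReal (θ * ((x + r) - (x - r)))
        = ENNReal.ofReal θ * volume (Metric.closedBall x r) := by
          rw [hball, ENNReal.ofReal_mul' (by linarith)]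
      _ < volume (S ∩ Metric.closedBall x r) :=
          (ENNReal.lt_div_iff_mul_lt (Or.inl (by simp [hball]; linarith))
            (Or.inl (by simp [hball]))).1 hr
      _ ≤ volume (B ∩ Icc (x - r) (x + r)) := by
          rw [Real.closedBall_eq_Icc]
          exact measure_mono (inter_subset_inter_left _ inter_subset_left)
      _ = volume (B ∩ Ioo (x - r) (x + r)) :=
          measure_congr (ae_eq_set_inter (ae_eq_refl B) Ioo_ae_eq_Icc.symm)
  calc θ * ((x + r) - (x - r)) ≤ (ENNReal.ofReal (θ * ((x + r) - (x - r)))).toReal :=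
        ENNReal.toReal_ofReal' ▸ le_max_left _ _
    _ < volume.real (B ∩ Ioo (x - r) (x + r)) :=
        ENNReal.toReal_strict_mono (volume_inter_Ioo_ne_top _ _ _) hlt

theorem exists_excess_pos_of_disjoint {c a b : ℝ} (hc : 0 < c) (hab : a ≤ b) {A B : Set ℝ}
    (hB : MeasurableSet B) (hAB : Disjoint A B) (hA : 0 ≤ excess c A a b)
    (hBpos : 0 < excess c B a b) :
    ∃ s t, a ≤ s ∧ s < t ∧ t ≤ b ∧ 0 < excess c A s t ∧ 0 < excess c B s t := by
  have hF : Continuous (excess c B a) := continuous_excess c B a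
  -- `t₀` is the last point with `excess c B a t₀ ≤ 0`; just after it, `B` has density `> c`
  -- both on `(a, t)` and, by continuity, on `(t, b)`.
  obtain ⟨t₀, ⟨hat₀, ht₀b⟩, hFt₀, hFpos⟩ := exists_nonpos_forall_Ioc_pos hF hab (by simp) hBpos
  have hnear : ∀ᶠ t in 𝓝[>] t₀, excess c B a t < excess c B a b ∧ t < b :=
    (hF.continuousWithinAt.eventually_lt continuousWithinAt_const (hFt₀.trans_lt hBpos)).and
      (eventually_nhdsWithin_of_eventually_nhds (eventually_lt_nhds ht₀b))
  obtain ⟨u, htu : t₀ < u, hnear⟩ := mem_nhdsGT_iff_exists_Ioo_subset.1 hnear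
  obtain ⟨m, ht₀m, hmu⟩ := exists_between htu
  have hBm : 0 < excess c B t₀ m := by
    have := excess_add (c := c) (S := B) hat₀ ht₀m.le
    linarith [hFpos m ⟨ht₀m, (hnear ⟨ht₀m, hmu⟩).2.le⟩]
  have hBm_ne : volume (B ∩ Ioo t₀ m) ≠ 0 := by
    intro h0
    rw [excess, measureReal_def, h0, ENNReal.toReal_zero] at hBm
    nlinarith
  have hc1 : c < 1 := by
    have hBle : volume.real (B ∩ Ioo a b) ≤ b - a :=
      (measureReal_mono inter_subset_right measure_Ioo_lt_top.ne).trans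
        (Real.volume_real_Ioo_of_le hab).le
    rw [excess] at hBpos
    nlinarith
  -- On `(s, t)` the density of `B` exceeds `max c (1 - c)`, so that of `A` is below `c`.
  obtain ⟨s, t, hs, hst, ht, hdens⟩ :=
    exists_Ioo_lt_measureReal_inter hB (max_lt hc1 (by linarith : 1 - c < 1)) hBm_ne
  have hsum : volume.real (A ∩ Ioo s t) + volume.real (B ∩ Ioo s t) ≤ t - s := by
    rw [← measureReal_union (hAB.mono inter_subset_left inter_subset_left)
      (hB.inter measurableSet_Ioo) (volume_inter_Ioo_ne_top A s t)
      (volume_inter_Ioo_ne_top B s t), ← Real.volume_real_Ioo_of_le hst.le]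
    exact measureReal_mono (union_subset inter_subset_right inter_subset_right)
      measure_Ioo_lt_top.ne
  have hAst : excess c A s t < 0 := by
    rw [excess]
    nlinarith [le_max_right c (1 - c)]
  have hBst : 0 < excess c B s t := by
    rw [excess]
    nlinarith [le_max_left c (1 - c)]
  obtain ⟨hFt, htb⟩ := hnear ⟨hs.trans hst, ht.trans hmu⟩
  have hFs : 0 < excess c B a s := hFpos s ⟨hs, hst.le.trans htb.le⟩
  have has : a ≤ s := hat₀.trans hs.le
  have hA_as := excess_add (c := c) (S := A) has (hst.le.trans htb.le)
  have hA_sb := excess_add (c := c) (S := A) hst.le htb.le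
  have hB_at := excess_add (c := c) (S := B) has hst.le
  have hB_ab := excess_add (c := c) (S := B) (has.trans hst.le) htb.le
  by_cases hAs : 0 < excess c A a s
  · exact ⟨a, s, le_rfl, hat₀.trans_lt hs, hst.le.trans htb.le, hAs, hFs⟩
  · exact ⟨t, b, has.trans hst.le, htb, le_rfl, by linarith, by linarith⟩

section LevelSets

variable {g : ℝ → ℝ} {δ : ℝ}

lemma measurableSet_lev (hg : ContinuousOn g (Icc 0 1)) (δ : ℝ) (k : ℤ) :
    MeasurableSet (lev g δ k) :=
  (hg.preimage_isClosed_of_isClosed isClosed_Icc isClosed_Icc).measurableSet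

lemma measurableSet_nbr (hg : ContinuousOn g (Icc 0 1)) (δ : ℝ) (k : ℤ) :
    MeasurableSet (nbr g δ k) :=
  ((measurableSet_lev hg δ _).union (measurableSet_lev hg δ _)).union (measurableSet_lev hg δ _)

lemma len_compl_nbr_inter_le_of_notMem_sat (hg : ContinuousOn g (Icc 0 1)) {k : ℕ}
    (hk : k ∉ sat g δ) {a b : ℝ} (ha : 0 ≤ a) (hab : a < b) (hb : b ≤ 1)
    (hlow : 0.01 * (b - a) ≤ len (lev g δ k ∩ Ioo a b)) :
    len ((Icc 0 1 \ nbr g δ k) ∩ Ioo a b) ≤ 0.01 * (b - a) := by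
  by_contra! hhigh
  have hdisj : Disjoint (lev g δ k) (Icc 0 1 \ nbr g δ k) :=
    disjoint_sdiff_right.mono_left (subset_union_right.trans subset_union_left)
  obtain ⟨s, t, has, hst, htb, hA, hB⟩ := exists_excess_pos_of_disjoint (by norm_num) hab.le
    ((measurableSet_Icc).diff (measurableSet_nbr hg δ k)) hdisj (sub_nonneg.2 hlow)
    (sub_pos.2 hhigh)
  exact hk ⟨s, t, ha.trans has, hst, htb.trans hb, sub_pos.1 hA, sub_pos.1 hB⟩

lemma sub_le_len_lev_inter_add (k : ℤ) {a b : ℝ} (ha : 0 ≤ a) (hab : a ≤ b) (hb : b ≤ 1) :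
    b - a ≤ len (lev g δ (k - 1) ∩ Ioo a b) + len (lev g δ k ∩ Ioo a b)
      + len (lev g δ (k + 1) ∩ Ioo a b) + len ((Icc 0 1 \ nbr g δ k) ∩ Ioo a b) := by
  have hcover : Ioo a b ⊆ (lev g δ (k - 1) ∩ Ioo a b ∪ lev g δ k ∩ Ioo a b
      ∪ lev g δ (k + 1) ∩ Ioo a b) ∪ (Icc 0 1 \ nbr g δ k) ∩ Ioo a b := by
    intro x hx
    by_cases hxk : x ∈ nbr g δ k
    · rcases hxk with (h | h) | h
      · exact Or.inl (Or.inl (Or.inl ⟨h, hx⟩))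
      · exact Or.inl (Or.inl (Or.inr ⟨h, hx⟩))
      · exact Or.inl (Or.inr ⟨h, hx⟩)
    · exact Or.inr ⟨⟨⟨ha.trans hx.1.le, hx.2.le.trans hb⟩, hxk⟩, hx⟩
  have hfin : volume ((lev g δ (k - 1) ∩ Ioo a b ∪ lev g δ k ∩ Ioo a b
      ∪ lev g δ (k + 1) ∩ Ioo a b) ∪ (Icc 0 1 \ nbr g δ k) ∩ Ioo a b) ≠ ⊤ :=
    measure_ne_top_of_subset (fun x hx => by rcases hx with ((h | h) | h) | h <;> exact h.2)
      measure_Ioo_lt_top.ne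
  calc b - a = volume.real (Ioo a b) := (Real.volume_real_Ioo_of_le hab).symm
    _ ≤ _ := measureReal_mono hcover hfin
    _ ≤ _ := by
      grw [measureReal_union_le, measureReal_union_le, measureReal_union_le]
      exact le_rfl

lemma len_lev_sub_one_inter_le (hδ : 0 ≤ δ) (k : ℤ)
    (hfin : {s ∈ Icc (0 : ℝ) 1 | g s = (k : ℝ) * δ}.Finite) (I : Set ℝ) :
    len (lev g δ (k - 1) ∩ I) ≤ len ((Icc 0 1 \ nbr g δ (k + 1)) ∩ I) := by
  have hsub : (lev g δ (k - 1) ∩ I) \ {s ∈ Icc (0 : ℝ) 1 | g s = (k : ℝ) * δ}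
      ⊆ (Icc 0 1 \ nbr g δ (k + 1)) ∩ I := by
    rintro x ⟨⟨⟨hx01, -, hxk⟩, hxI⟩, hxZ⟩
    have hlt : g x < k * δ :=
      lt_of_le_of_ne (by push_cast at hxk; linarith) fun h => hxZ ⟨hx01, h⟩
    refine ⟨⟨hx01, ?_⟩, hxI⟩
    rintro ((⟨-, h, -⟩ | ⟨-, h, -⟩) | ⟨-, h, -⟩) <;> push_cast at h <;> linarith
  calc len (lev g δ (k - 1) ∩ I)
      = len ((lev g δ (k - 1) ∩ I) \ {s ∈ Icc (0 : ℝ) 1 | g s = (k : ℝ) * δ}) :=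
        congrArg ENNReal.toReal (measure_sdiff_null (hfin.measure_zero volume)).symm
    _ ≤ _ := measureReal_mono hsub
        (measure_ne_top_of_subset (inter_subset_left.trans sdiff_subset) measure_Icc_lt_top.ne)

end LevelSets

theorem stmt2_general (δ : ℝ) (hδ : 0 < δ) (g : ℝ → ℝ)
    (hg : ContinuousOn g (Icc (0:ℝ) 1))
    (hlev : ∀ k : ℕ, {s ∈ Icc (0:ℝ) 1 | g s = (k : ℝ) * δ}.Finite)
    (k : ℕ) (hk : k ∈ unsat g δ)
    (a b : ℝ) (ha : 0 ≤ a) (hab : a < b) (hb : b ≤ 1)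
    (hlow : 0.01 * (b - a) ≤ len (lev g δ k ∩ Ioo a b))
    (hhigh : len (lev g δ k ∩ Ioo a b) ≤ 0.1 * (b - a)) :
    len (lev g δ ((k : ℤ) - 1) ∩ Ioo a b) > 0.8 * (b - a) ∨
    len (lev g δ ((k : ℤ) + 1) ∩ Ioo a b) > 0.8 * (b - a) := by
  obtain ⟨hk, -, hk_succ⟩ := hk
  have hcompl := len_compl_nbr_inter_le_of_notMem_sat hg hk ha hab hb hlow
  have hcover := sub_le_len_lev_inter_add (g := g) (δ := δ) k ha hab.le hb
  by_contra! hsmall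
  have hsucc : 0.01 * (b - a) ≤ len (lev g δ (k + 1 : ℕ) ∩ Ioo a b) := by
    push_cast
    linarith
  have hcompl_succ := len_compl_nbr_inter_le_of_notMem_sat hg hk_succ ha hab hb hsucc
  have hpred := len_lev_sub_one_inter_le hδ.le k (by exact_mod_cast hlev k) (Ioo a b)
  push_cast at hcompl_succ
  linarith

/-- Lemma 3.1 (rigidity): if `k ∈ 𝒫` and `I = (a,b) ⊆ [0,1]` is an interval with
`0.01|I| ≤ |E_k ∩ I| ≤ 0.1|I|`, then `|E_{k-1} ∩ I| > 0.8|I|` or `|E_{k+1} ∩ I| > 0.8|I|`. -/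
theorem stmt2 (δ : ℝ) (hδ : 0 < δ) (M : ℕ) (hM : 100 < M) (g : ℝ → ℝ)
    (hg : ContinuousOn g (Icc (0:ℝ) 1)) (hg0 : g 0 = 0) (hg1 : g 1 = (M : ℝ) * δ)
    (hlev : ∀ k : ℕ, {s ∈ Icc (0:ℝ) 1 | g s = (k : ℝ) * δ}.Finite)
    (k : ℕ) (hk : k ∈ unsat g δ)
    (a b : ℝ) (ha : 0 ≤ a) (hab : a < b) (hb : b ≤ 1)
    (hlow : 0.01 * (b - a) ≤ len (lev g δ k ∩ Ioo a b))
    (hhigh : len (lev g δ k ∩ Ioo a b) ≤ 0.1 * (b - a)) :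
    len (lev g δ ((k : ℤ) - 1) ∩ Ioo a b) > 0.8 * (b - a) ∨
    len (lev g δ ((k : ℤ) + 1) ∩ Ioo a b) > 0.8 * (b - a) :=
  stmt2_general δ hδ g hg hlev k hk a b ha hab hb hlow hhigh
end

section
/- Let k, k' ∈ ℕ with |k − k'| > 1, and suppose that k ∉ S or k' ∉ S. Suppose k has a maximal left-terminal interval of length τ and k' has a maximal left-terminal interval of length τ'. Then either τ > 3τ' or τ' > 3τ. The same conclusion holds if both intervals are maximal right-terminal intervals. -/
open MeasureTheory Set

/-- `(0,τ)` is a left-terminal interval for the index `k`. -/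
def leftTerminal (g : ℝ → ℝ) (δ : ℝ) (k : ℤ) (τ : ℝ) : Prop :=
  0 < τ ∧ τ ≤ 1 ∧ len (Ioo (0:ℝ) τ ∩ lev g δ k) > 0.03 * τ

/-- `(0,τ)` is a maximal left-terminal interval for the index `k`. -/
def maxLeftTerminal (g : ℝ → ℝ) (δ : ℝ) (k : ℤ) (τ : ℝ) : Prop :=
  leftTerminal g δ k τ ∧
  ∀ τ' : ℝ, τ < τ' → τ' ≤ 1 → len (Ioo (0:ℝ) τ' ∩ lev g δ k) < 0.03 * τ'

/-- `(1-τ,1)` is a right-terminal interval for the index `k`. -/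
def rightTerminal (g : ℝ → ℝ) (δ : ℝ) (k : ℤ) (τ : ℝ) : Prop :=
  0 < τ ∧ τ ≤ 1 ∧ len (Ioo (1 - τ) 1 ∩ lev g δ k) > 0.03 * τ

/-- `(1-τ,1)` is a maximal right-terminal interval for the index `k`. -/
def maxRightTerminal (g : ℝ → ℝ) (δ : ℝ) (k : ℤ) (τ : ℝ) : Prop :=
  rightTerminal g δ k τ ∧
  ∀ τ' : ℝ, τ < τ' → τ' ≤ 1 → len (Ioo (1 - τ') 1 ∩ lev g δ k) < 0.03 * τ'

/-!
If neither interval is more than three times as long as the other, the longer one `I` contains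
both, so `E_k` and `E_{k'}` each fill more than `0.03 · |I| / 3 = 0.01 |I|` of `I`. As
`|k - k'| > 1`, the band `E_{k'}` meets `N_k` only where `g` takes the value `(k - 1)δ` or
`(k + 2)δ`, a finite set; hence `E_{k'} ∩ I` lies in `N_kᶜ` up to a null set, and `I` witnesses
`k ∈ S`. By symmetry also `k' ∈ S`.
-/

lemma len_mono_ae {A B : Set ℝ} (hB : volume B ≠ ⊤) (h : A ≤ᵐ[volume] B) : len A ≤ len B :=
  ENNReal.toReal_mono hB (measure_mono_ae h)

section Levels

variable {g : ℝ → ℝ} {δ : ℝ}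

lemma nbr_subset (hδ : 0 < δ) (k : ℤ) :
    nbr g δ k ⊆ {s ∈ Icc (0:ℝ) 1 | ((k : ℝ) - 1) * δ ≤ g s ∧ g s ≤ ((k : ℝ) + 2) * δ} := by
  rintro s ((⟨hs, hlo, hhi⟩ | ⟨hs, hlo, hhi⟩) | ⟨hs, hlo, hhi⟩) <;> push_cast at hlo hhi <;>
    exact ⟨hs, by nlinarith, by nlinarith⟩

lemma exists_lev_inter_nbr_subset (hδ : 0 < δ) {k k' : ℕ} (hkk : 1 < |(k : ℤ) - k'|) :
    ∃ m : ℕ, lev g δ k' ∩ nbr g δ k ⊆ {s ∈ Icc (0:ℝ) 1 | g s = m * δ} := by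
  rcases lt_abs.mp hkk with hlt | hlt
  · refine ⟨k - 1, fun s ⟨⟨hs, _, hhi⟩, hn⟩ => ⟨hs, ?_⟩⟩
    have hk : (k' : ℝ) + 2 ≤ k := by exact_mod_cast (by omega : (k' : ℤ) + 2 ≤ k)
    obtain ⟨-, hlo, -⟩ := nbr_subset hδ k hn
    rw [Nat.cast_sub (by omega)]
    push_cast at hlo hhi ⊢
    nlinarith
  · refine ⟨k + 2, fun s ⟨⟨hs, hlo, _⟩, hn⟩ => ⟨hs, ?_⟩⟩
    have hk : (k : ℝ) + 2 ≤ k' := by exact_mod_cast (by omega : (k : ℤ) + 2 ≤ k')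
    obtain ⟨-, -, hhi⟩ := nbr_subset hδ k hn
    push_cast at hlo hhi ⊢
    nlinarith

lemma volume_lev_inter_nbr (hδ : 0 < δ)
    (hlev : ∀ k : ℕ, {s ∈ Icc (0:ℝ) 1 | g s = (k : ℝ) * δ}.Finite)
    {k k' : ℕ} (hkk : 1 < |(k : ℤ) - k'|) :
    volume (lev g δ k' ∩ nbr g δ k) = 0 := by
  obtain ⟨m, hm⟩ := exists_lev_inter_nbr_subset hδ hkk
  exact measure_mono_null hm ((hlev m).measure_zero _)

lemma mem_sat_of_lt_len {k k' : ℕ} (hnull : volume (lev g δ k' ∩ nbr g δ k) = 0)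
    {a b : ℝ} (ha : 0 ≤ a) (hab : a < b) (hb : b ≤ 1)
    (hk : 0.01 * (b - a) < len (lev g δ k ∩ Ioo a b))
    (hk' : 0.01 * (b - a) < len (lev g δ k' ∩ Ioo a b)) :
    k ∈ sat g δ := by
  have hfin : volume ((Icc (0:ℝ) 1 \ nbr g δ k) ∩ Ioo a b) ≠ ⊤ :=
    measure_ne_top_of_subset inter_subset_right measure_Ioo_lt_top.ne
  have hae : (lev g δ k' ∩ Ioo a b : Set ℝ) ≤ᵐ[volume]
      ((Icc (0:ℝ) 1 \ nbr g δ k) ∩ Ioo a b : Set ℝ) := by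
    refine ae_le_set.mpr (measure_mono_null ?_ hnull)
    rintro s ⟨⟨hs, hsI⟩, hsN⟩
    by_contra hsn
    exact hsN ⟨⟨hs.1, fun h => hsn ⟨hs, h⟩⟩, hsI⟩
  exact ⟨a, b, ha, hab, hb, hk, hk'.trans_le (len_mono_ae hfin hae)⟩

lemma mem_sat_of_terminal {k k' : ℕ} (hnull : volume (lev g δ k' ∩ nbr g δ k) = 0)
    {a b τ τ' : ℝ} (ha : 0 ≤ a) (hab : a < b) (hb : b ≤ 1)
    (hτ : b - a ≤ 3 * τ) (hτ' : b - a ≤ 3 * τ') {J J' : Set ℝ}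
    (hJ : J ⊆ Ioo a b) (hJ' : J' ⊆ Ioo a b)
    (hk : 0.03 * τ < len (J ∩ lev g δ k)) (hk' : 0.03 * τ' < len (J' ∩ lev g δ k')) :
    k ∈ sat g δ := by
  have hmono : ∀ {E J : Set ℝ}, J ⊆ Ioo a b → len (J ∩ E) ≤ len (E ∩ Ioo a b) :=
    fun hJ => len_mono_ae (measure_ne_top_of_subset inter_subset_right measure_Ioo_lt_top.ne)
      (inter_comm _ _ ▸ inter_subset_inter_right _ hJ).eventuallyLE
  refine mem_sat_of_lt_len hnull ha hab hb ?_ ?_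
  · linarith [hmono (E := lev g δ k) hJ]
  · linarith [hmono (E := lev g δ k') hJ']

lemma lt_three_mul_or_of_terminal (hδ : 0 < δ)
    (hlev : ∀ k : ℕ, {s ∈ Icc (0:ℝ) 1 | g s = (k : ℝ) * δ}.Finite)
    {k k' : ℕ} (hkk : 1 < |(k : ℤ) - k'|) (hS : k ∉ sat g δ ∨ k' ∉ sat g δ)
    {a b τ τ' : ℝ} (ha : 0 ≤ a) (hab : a < b) (hb : b ≤ 1) (hba : b - a = max τ τ')
    {J J' : Set ℝ} (hJ : J ⊆ Ioo a b) (hJ' : J' ⊆ Ioo a b)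
    (hk : 0.03 * τ < len (J ∩ lev g δ k)) (hk' : 0.03 * τ' < len (J' ∩ lev g δ k')) :
    τ > 3 * τ' ∨ τ' > 3 * τ := by
  by_contra! hle
  have hτ : b - a ≤ 3 * τ := hba ▸ max_le (by linarith) hle.2
  have hτ' : b - a ≤ 3 * τ' := hba ▸ max_le hle.1 (by linarith)
  have hk'k : 1 < |(k' : ℤ) - k| := abs_sub_comm (k : ℤ) k' ▸ hkk
  rcases hS with hS | hS
  · exact hS (mem_sat_of_terminal (volume_lev_inter_nbr hδ hlev hkk)
      ha hab hb hτ hτ' hJ hJ' hk hk')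
  · exact hS (mem_sat_of_terminal (volume_lev_inter_nbr hδ hlev hk'k)
      ha hab hb hτ' hτ hJ' hJ hk' hk)

end Levels

theorem stmt3_general (δ : ℝ) (hδ : 0 < δ) (g : ℝ → ℝ)
    (hlev : ∀ k : ℕ, {s ∈ Icc (0:ℝ) 1 | g s = (k : ℝ) * δ}.Finite)
    (k k' : ℕ) (hkk : |(k : ℤ) - (k' : ℤ)| > 1)
    (hS : k ∉ sat g δ ∨ k' ∉ sat g δ) (τ τ' : ℝ) :
    (maxLeftTerminal g δ k τ → maxLeftTerminal g δ k' τ' → τ > 3 * τ' ∨ τ' > 3 * τ) ∧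
    (maxRightTerminal g δ k τ → maxRightTerminal g δ k' τ' → τ > 3 * τ' ∨ τ' > 3 * τ) := by
  have hτ_le_max := le_max_left τ τ'
  have hτ'_le_max := le_max_right τ τ'
  constructor
  · rintro ⟨⟨hτ, hτ1, hk⟩, -⟩ ⟨⟨-, hτ'1, hk'⟩, -⟩
    exact lt_three_mul_or_of_terminal hδ hlev hkk hS le_rfl (by linarith) (max_le hτ1 hτ'1)
      (sub_zero _) (Ioo_subset_Ioo_right hτ_le_max) (Ioo_subset_Ioo_right hτ'_le_max) hk hk'
  · rintro ⟨⟨hτ, hτ1, hk⟩, -⟩ ⟨⟨-, hτ'1, hk'⟩, -⟩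
    exact lt_three_mul_or_of_terminal hδ hlev hkk hS (by simp [hτ1, hτ'1]) (by linarith) le_rfl
      (sub_sub_cancel _ _) (Ioo_subset_Ioo_left (by linarith)) (Ioo_subset_Ioo_left (by linarith))
      hk hk'

/-- Lemma 3.5 (interval growth): if `|k - k'| > 1` and `k ∉ 𝒮` or `k' ∉ 𝒮`, and `k, k'` have
maximal left-terminal intervals of lengths `τ, τ'`, then `τ > 3τ'` or `τ' > 3τ`; the same
holds for maximal right-terminal intervals. -/
theorem stmt3 (δ : ℝ) (hδ : 0 < δ) (M : ℕ) (hM : 100 < M) (g : ℝ → ℝ)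
    (hg : ContinuousOn g (Icc (0:ℝ) 1)) (hg0 : g 0 = 0) (hg1 : g 1 = (M : ℝ) * δ)
    (hlev : ∀ k : ℕ, {s ∈ Icc (0:ℝ) 1 | g s = (k : ℝ) * δ}.Finite)
    (k k' : ℕ) (hkk : |(k : ℤ) - (k' : ℤ)| > 1)
    (hS : k ∉ sat g δ ∨ k' ∉ sat g δ) (τ τ' : ℝ) :
    (maxLeftTerminal g δ k τ → maxLeftTerminal g δ k' τ' → τ > 3 * τ' ∨ τ' > 3 * τ) ∧
    (maxRightTerminal g δ k τ → maxRightTerminal g δ k' τ' → τ > 3 * τ' ∨ τ' > 3 * τ) :=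
  stmt3_general δ hδ g hlev k k' hkk hS τ τ'
end

section
/- One has Σ_{k∈ℕ} ∬_{{(s,t) : s ∈ E_k, t ∈ [0,1]∖N_k}} ds dt / |s−t|² ≤ ∬_{{(s,t) ∈ [0,1]×[0,1] : |g(s)−g(t)| > δ}} ds dt / |s−t|². -/
open MeasureTheory Set

/-! Split `[0,1]` by the bands `E_k`. For `s ∈ E_k` and `t ∉ N_k` the value `g t` lies outside
`[(k-1)δ, (k+2)δ]`, so `|g s - g t| > δ`: every rectangle `E_k × ([0,1] \ N_k)` lies in the region
on the right. Two different bands `E_j`, `E_k` meet only where `g` takes a value `kδ`, a finite set,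
so the rectangles are almost disjoint and their integrals add up to at most the integral over that
region. -/

theorem MeasureTheory.tsum_setLIntegral_le_of_aedisjoint {α ι : Type*} [MeasurableSpace α]
    [Countable ι] {μ : Measure α} {f : α → ENNReal} {s : ι → Set α} {t : Set α}
    (hs : ∀ i, NullMeasurableSet (s i) μ) (hd : Pairwise (Function.onFun (AEDisjoint μ) s))
    (hst : ∀ i, s i ⊆ t) :
    ∑' i, ∫⁻ x in s i, f x ∂μ ≤ ∫⁻ x in t, f x ∂μ := by
  rw [← lintegral_iUnion₀ hs hd]
  exact lintegral_mono_set (iUnion_subset hst)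

theorem MeasureTheory.AEDisjoint.prod_left {α β : Type*} [MeasurableSpace α] [MeasurableSpace β]
    {μ : Measure α} {ν : Measure β} [SFinite ν] {s s' : Set α} (h : AEDisjoint μ s s')
    (t t' : Set β) : AEDisjoint (μ.prod ν) (s ×ˢ t) (s' ×ˢ t') := by
  refine measure_mono_null (prod_inter_prod.trans_subset (prod_mono le_rfl (subset_univ _))) ?_
  rw [Measure.prod_prod, h.eq, zero_mul]

section Bands

variable {g : ℝ → ℝ} {δ : ℝ}

theorem isClosed_lev (hg : ContinuousOn g (Icc (0:ℝ) 1)) (k : ℤ) : IsClosed (lev g δ k) :=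
  hg.preimage_isClosed_of_isClosed isClosed_Icc isClosed_Icc

theorem isClosed_nbr (hg : ContinuousOn g (Icc (0:ℝ) 1)) (k : ℤ) : IsClosed (nbr g δ k) :=
  ((isClosed_lev hg _).union (isClosed_lev hg _)).union (isClosed_lev hg _)

theorem lev_inter_lev_subset {j k : ℤ} (hjk : j < k) :
    lev g δ j ∩ lev g δ k ⊆ {s ∈ Icc (0:ℝ) 1 | g s = (k : ℝ) * δ} := by
  rintro s ⟨⟨hs, -, hsj⟩, -, hks, hsk⟩
  have hδ : 0 ≤ δ := by linarith
  have hjk' : (j : ℝ) + 1 ≤ k := by exact_mod_cast hjk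
  exact ⟨hs, le_antisymm (hsj.trans (mul_le_mul_of_nonneg_right hjk' hδ)) hks⟩

theorem lt_abs_sub_of_mem_lev_of_notMem_nbr {k : ℤ} {s t : ℝ} (hs : s ∈ lev g δ k)
    (ht : t ∈ Icc (0:ℝ) 1 \ nbr g δ k) : δ < |g s - g t| := by
  obtain ⟨-, hks, hsk⟩ := hs
  obtain ⟨ht01, htN⟩ := ht
  have hδ : 0 ≤ δ := by linarith
  have hout : g t < ((k : ℝ) - 1) * δ ∨ ((k : ℝ) + 2) * δ < g t := by
    by_contra! hin
    refine htN ?_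
    rcases le_or_gt (g t) (k * δ) with h₁ | h₁
    · exact Or.inl (Or.inl ⟨ht01, by push_cast; constructor <;> linarith⟩)
    rcases le_or_gt (g t) ((k + 1) * δ) with h₂ | h₂
    · exact Or.inl (Or.inr ⟨ht01, h₁.le, h₂⟩)
    · exact Or.inr ⟨ht01, by push_cast; constructor <;> linarith⟩
  rcases hout with h | h
  · rw [abs_of_pos (by linarith)]; linarith
  · rw [abs_of_neg (by linarith)]; linarith

end Bands

theorem stmt11_general (δ : ℝ) (g : ℝ → ℝ)
    (hg : ContinuousOn g (Icc (0:ℝ) 1))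
    (hlev : ∀ k : ℕ, {s ∈ Icc (0:ℝ) 1 | g s = (k : ℝ) * δ}.Finite) :
    ∑' k : ℕ, ∫⁻ p in (lev g δ k) ×ˢ (Icc (0:ℝ) 1 \ nbr g δ k),
        ENNReal.ofReal (1 / |p.1 - p.2| ^ 2) ≤
      ∫⁻ p in {p : ℝ × ℝ | p.1 ∈ Icc (0:ℝ) 1 ∧ p.2 ∈ Icc (0:ℝ) 1 ∧ δ < |g p.1 - g p.2|},
        ENNReal.ofReal (1 / |p.1 - p.2| ^ 2) := by
  have hdisj : ∀ j k : ℕ, j < k → AEDisjoint volume (lev g δ j) (lev g δ k) := fun j k hjk =>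
    measure_mono_null (lev_inter_lev_subset (Int.ofNat_lt.mpr hjk))
      (by simpa using (hlev k).measure_zero volume)
  refine tsum_setLIntegral_le_of_aedisjoint (fun k => ?_) (fun j k hjk => ?_) (fun k => ?_)
  · exact ((isClosed_lev hg k).measurableSet.prod
      (measurableSet_Icc.diff (isClosed_nbr hg k).measurableSet)).nullMeasurableSet
  · rw [Measure.volume_eq_prod]
    rcases hjk.lt_or_gt with h | h
    · exact (hdisj j k h).prod_left _ _
    · exact ((hdisj k j h).prod_left _ _).symm
  · rintro ⟨s, t⟩ ⟨hs, ht⟩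
    exact ⟨hs.1, ht.1, lt_abs_sub_of_mem_lev_of_notMem_nbr hs ht⟩

/-- Inequality (5): `∑_{k ∈ ℕ} ∬_{s ∈ E_k, t ∉ N_k} ds dt / |s-t|²
≤ ∬_{s,t ∈ [0,1], |g(s)-g(t)| > δ} ds dt / |s-t|²`. -/
theorem stmt11 (δ : ℝ) (hδ : 0 < δ) (M : ℕ) (hM : 100 < M) (g : ℝ → ℝ)
    (hg : ContinuousOn g (Icc (0:ℝ) 1)) (hg0 : g 0 = 0) (hg1 : g 1 = (M : ℝ) * δ)
    (hlev : ∀ k : ℕ, {s ∈ Icc (0:ℝ) 1 | g s = (k : ℝ) * δ}.Finite) :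
    ∑' k : ℕ, ∫⁻ p in (lev g δ k) ×ˢ (Icc (0:ℝ) 1 \ nbr g δ k),
        ENNReal.ofReal (1 / |p.1 - p.2| ^ 2) ≤
      ∫⁻ p in {p : ℝ × ℝ | p.1 ∈ Icc (0:ℝ) 1 ∧ p.2 ∈ Icc (0:ℝ) 1 ∧ δ < |g p.1 - g p.2|},
        ENNReal.ofReal (1 / |p.1 - p.2| ^ 2) :=
  stmt11_general δ g hg hlev
end

section
/- For every δ > 0, every A > 0, and every ε > 0, there exists a continuous function g : [0,1] → [0,∞) such that g(1) − g(0) > A and ∬_{{(s,t) ∈ [0,1]×[0,1] : |g(s)−g(t)| > δ}} ds dt / |s−t|² < ε. (In particular, there is no constant C > 0 and δ₀ > 0 such that |g(1)−g(0)| ≤ C·δ·∬_{{|g(s)−g(t)|>δ}} ds dt/|s−t|² holds for all continuous g : [0,1] → [0,∞) and all δ < δ₀.) -/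
open MeasureTheory Set

open Filter
open scoped ENNReal

lemma choose_L(k ε : ℝ) (hk : 0 < k) (hε : 0 < ε) :
    ∃ L : ℝ, 0 < L ∧ 2 ≤ Real.exp (k*L) ∧ 8*L*Real.exp (-(k*L)) < ε := by
  have h0 : Tendsto (fun x : ℝ => x ^ 1 * Real.exp (-x)) atTop (nhds 0) :=
    Real.tendsto_pow_mul_exp_neg_atTop_nhds_zero 1
  have hkL : Tendsto (fun L : ℝ => k * L) atTop atTop :=
    Filter.tendsto_id.const_mul_atTop hk
  have h1 : Tendsto (fun L : ℝ => (8/k) * ((k*L) ^ 1 * Real.exp (-(k*L)))) atTop (nhds 0) := by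
    have := (h0.comp hkL).const_mul (8/k)
    simpa using this
  have h2 : Tendsto (fun L : ℝ => 8*L*Real.exp (-(k*L))) atTop (nhds 0) := by
    refine h1.congr (fun L => ?_)
    field_simp
  have h3 : ∀ᶠ L in atTop, 8*L*Real.exp (-(k*L)) < ε := h2.eventually_lt_const hε
  have h4 : ∀ᶠ L : ℝ in atTop, 2 ≤ Real.exp (k*L) := by
    filter_upwards [eventually_ge_atTop (Real.log 2 / k)] with L hL
    have : Real.log 2 ≤ k * L := by
      rw [div_le_iff₀ hk] at hL; linarith [hL]
    calc (2:ℝ) = Real.exp (Real.log 2) := by rw [Real.exp_log]; norm_num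
      _ ≤ Real.exp (k*L) := Real.exp_le_exp.2 this
  obtain ⟨L, hL1, hL2, hL3⟩ := (h3.and (h4.and (eventually_gt_atTop (0:ℝ)))).exists
  exact ⟨L, hL3, hL2, hL1⟩

set_option maxHeartbeats 1000000 in
/-- The answer to Question 1.3 is negative: for every `δ > 0`, `A > 0` and `ε > 0` there is a
continuous nonnegative function `g` on `[0,1]` with `g(1) - g(0) > A` whose nonlocal energy
`∬_{s,t ∈ [0,1], |g(s)-g(t)| > δ} ds dt / |s-t|²` is smaller than `ε`. -/
theorem stmt12 (δ A ε : ℝ) (hδ : 0 < δ) (hA : 0 < A) (hε : 0 < ε) :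
    ∃ g : ℝ → ℝ, ContinuousOn g (Icc (0:ℝ) 1) ∧ (∀ s ∈ Icc (0:ℝ) 1, 0 ≤ g s) ∧
      g 1 - g 0 > A ∧
      ∫⁻ p in {p : ℝ × ℝ | p.1 ∈ Icc (0:ℝ) 1 ∧ p.2 ∈ Icc (0:ℝ) 1 ∧ δ < |g p.1 - g p.2|},
          ENNReal.ofReal (1 / |p.1 - p.2| ^ 2) < ENNReal.ofReal ε := by
  have hA1 : (0:ℝ) < A + 1 := by linarith
  obtain ⟨k, hk_def⟩ : ∃ x : ℝ, x = δ / (A + 1) := ⟨_, rfl⟩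
  have hk : 0 < k := hk_def ▸ div_pos hδ hA1
  obtain ⟨L, hL, hlam2', hsmall⟩ := choose_L k ε hk hε
  obtain ⟨lam, hlam_def⟩ : ∃ x : ℝ, x = Real.exp (k * L) := ⟨_, rfl⟩
  have hlam2 : 2 ≤ lam := hlam_def ▸ hlam2'
  have hlam1 : (1:ℝ) < lam := by linarith
  have heL : (1:ℝ) < Real.exp L := by
    rw [show (1:ℝ) = Real.exp 0 from (Real.exp_zero).symm]
    exact Real.exp_lt_exp.2 hL
  obtain ⟨β, hβ_def⟩ : ∃ x : ℝ, x = 1 / (Real.exp L - 1) := ⟨_, rfl⟩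
  have hx1 : Real.exp L - 1 ≠ 0 := by linarith
  have hβ : 0 < β := hβ_def ▸ div_pos one_pos (by linarith)
  obtain ⟨c, hc_def⟩ : ∃ x : ℝ, x = (A + 1) / L := ⟨_, rfl⟩
  have hc : 0 < c := hc_def ▸ div_pos hA1 hL
  obtain ⟨g, hg_def⟩ : ∃ g : ℝ → ℝ, g = fun s => c * (Real.log (s + β) - Real.log β) :=
    ⟨_, rfl⟩
  have hg_eval : ∀ s, g s = c * (Real.log (s + β) - Real.log β) := fun s => by rw [hg_def]
  -- basic facts
  have hpos : ∀ s : ℝ, 0 ≤ s → 0 < s + β := fun s hs => by linarith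
  have hg_mono : ∀ s t : ℝ, 0 ≤ t → t < s → g t < g s := by
    intro s t ht hts
    have h1 : Real.log (t + β) < Real.log (s + β) :=
      Real.log_lt_log (hpos t ht) (by linarith)
    rw [hg_eval, hg_eval]
    nlinarith [h1]
  have hg_nonneg : ∀ s ∈ Icc (0:ℝ) 1, 0 ≤ g s := by
    intro s hs
    have h0 : g 0 = 0 := by rw [hg_eval]; simp
    rcases eq_or_lt_of_le hs.1 with h | h
    · rw [← h, h0]
    · have h2 : g 0 < g s := hg_mono s 0 le_rfl h
      linarith
  have hg_cont : ContinuousOn g (Icc (0:ℝ) 1) := by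
    rw [hg_def]
    apply ContinuousOn.mul continuousOn_const
    apply ContinuousOn.sub _ continuousOn_const
    apply ContinuousOn.log (continuousOn_id.add continuousOn_const)
    intro x hx
    exact ne_of_gt (hpos x hx.1)
  have hgap : g 1 - g 0 > A := by
    have h1β : (1 + β) / β = Real.exp L := by
      rw [hβ_def]; field_simp; ring
    have h2 : g 1 - g 0 = c * L := by
      rw [hg_eval, hg_eval]
      have h3 : Real.log (1 + β) - Real.log β = L := by
        rw [← Real.log_div (by linarith) (ne_of_gt hβ), h1β, Real.log_exp]
      rw [show (0:ℝ) + β = β by ring]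
      nlinarith [h3]
    rw [h2, hc_def, div_mul_cancel₀ _ (ne_of_gt hL)]
    linarith
  refine ⟨g, hg_cont, hg_nonneg, hgap, ?_⟩
  -- the key derivation
  have hkey : ∀ s t : ℝ, 0 ≤ t → t < s → δ < g s - g t → lam * (t + β) < s + β := by
    intro s t ht hts hδlt
    have htβ := hpos t ht
    have hsβ : 0 < s + β := by linarith
    have h1 : δ / c < Real.log (s + β) - Real.log (t + β) := by
      rw [div_lt_iff₀ hc]
      rw [hg_eval, hg_eval] at hδlt
      nlinarith [hδlt]
    have hδc : δ / c = k * L := by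
      rw [hc_def, hk_def]; field_simp
    have h2 : Real.log ((s + β) / (t + β)) > k * L := by
      rw [Real.log_div (ne_of_gt hsβ) (ne_of_gt htβ)]; linarith [h1, hδc]
    have h3 : lam < (s + β) / (t + β) := by
      calc lam = Real.exp (k * L) := hlam_def
        _ < Real.exp (Real.log ((s + β) / (t + β))) := Real.exp_lt_exp.2 h2
        _ = (s + β) / (t + β) := Real.exp_log (div_pos hsβ htβ)
    rw [lt_div_iff₀ htβ] at h3
    linarith [h3]
  -- set up notation
  obtain ⟨f, hf_def⟩ : ∃ f : ℝ × ℝ → ℝ≥0∞,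
      f = fun p : ℝ × ℝ => ENNReal.ofReal (1 / |p.1 - p.2| ^ 2) := ⟨_, rfl⟩
  obtain ⟨S, hS_def⟩ : ∃ S : Set (ℝ × ℝ),
      S = {p : ℝ × ℝ | p.1 ∈ Icc (0:ℝ) 1 ∧ p.2 ∈ Icc (0:ℝ) 1 ∧ δ < |g p.1 - g p.2|} :=
    ⟨_, rfl⟩
  have hgoal : ∫⁻ p in {p : ℝ × ℝ | p.1 ∈ Icc (0:ℝ) 1 ∧ p.2 ∈ Icc (0:ℝ) 1 ∧
      δ < |g p.1 - g p.2|}, ENNReal.ofReal (1 / |p.1 - p.2| ^ 2) = ∫⁻ p in S, f p := by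
    rw [hS_def, hf_def]
  rw [hgoal]
  have hf_eval : ∀ p : ℝ × ℝ, f p = ENNReal.ofReal (1 / |p.1 - p.2| ^ 2) :=
    fun p => by rw [hf_def]
  have hS_mem : ∀ p : ℝ × ℝ,
      p ∈ S ↔ (p.1 ∈ Icc (0:ℝ) 1 ∧ p.2 ∈ Icc (0:ℝ) 1 ∧ δ < |g p.1 - g p.2|) := by
    intro p; rw [hS_def]; rfl
  have hg_meas : Measurable g := by
    rw [hg_def]
    apply Measurable.const_mul
    exact (Real.measurable_log.comp (measurable_id.add_const β)).sub measurable_const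
  have hf_meas : Measurable f := by
    rw [hf_def]
    apply Measurable.ennreal_ofReal
    exact measurable_const.div (((measurable_fst.sub measurable_snd).abs).pow measurable_const)
  have hS_meas : MeasurableSet S := by
    rw [hS_def]
    have h1 : MeasurableSet {p : ℝ × ℝ | p.1 ∈ Icc (0:ℝ) 1} :=
      measurable_fst measurableSet_Icc
    have h2 : MeasurableSet {p : ℝ × ℝ | p.2 ∈ Icc (0:ℝ) 1} :=
      measurable_snd measurableSet_Icc
    have h3 : MeasurableSet {p : ℝ × ℝ | δ < |g p.1 - g p.2|} :=
      measurableSet_lt measurable_const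
        ((hg_meas.comp measurable_fst).sub (hg_meas.comp measurable_snd)).abs
    exact h1.inter (h2.inter h3)
  obtain ⟨Sp, hSp_def⟩ : ∃ X : Set (ℝ × ℝ), X = S ∩ {p | p.2 < p.1} := ⟨_, rfl⟩
  obtain ⟨Sm, hSm_def⟩ : ∃ X : Set (ℝ × ℝ), X = S ∩ {p | p.1 < p.2} := ⟨_, rfl⟩
  have hSp_mem : ∀ p : ℝ × ℝ, p ∈ Sp ↔ p ∈ S ∧ p.2 < p.1 := by
    intro p; rw [hSp_def]; rfl
  have hSm_mem : ∀ p : ℝ × ℝ, p ∈ Sm ↔ p ∈ S ∧ p.1 < p.2 := by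
    intro p; rw [hSm_def]; rfl
  have hSp_meas : MeasurableSet Sp := by
    rw [hSp_def]
    exact hS_meas.inter (measurableSet_lt measurable_snd measurable_fst)
  have hSm_meas : MeasurableSet Sm := by
    rw [hSm_def]
    exact hS_meas.inter (measurableSet_lt measurable_fst measurable_snd)
  have hunion : S = Sp ∪ Sm := by
    ext p
    rw [mem_union, hSp_mem, hSm_mem]
    constructor
    · intro hp
      have hne : p.1 ≠ p.2 := by
        intro h
        have h3 : δ < |g p.1 - g p.2| := ((hS_mem p).1 hp).2.2
        rw [h, sub_self, abs_zero] at h3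
        linarith
      rcases hne.lt_or_gt with h | h
      · exact Or.inr ⟨hp, h⟩
      · exact Or.inl ⟨hp, h⟩
    · rintro (⟨hp, _⟩ | ⟨hp, _⟩) <;> exact hp
  have hdisj : Disjoint Sp Sm := by
    rw [Set.disjoint_left]
    intro p h1 h2
    have h1' : p.2 < p.1 := ((hSp_mem p).1 h1).2
    have h2' : p.1 < p.2 := ((hSm_mem p).1 h2).2
    linarith
  have hsplit : ∫⁻ p in S, f p = (∫⁻ p in Sp, f p) + ∫⁻ p in Sm, f p := by
    rw [hunion]
    exact lintegral_union hSm_meas hdisj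
  -- swap symmetry
  have hmp : MeasurePreserving (Prod.swap : ℝ × ℝ → ℝ × ℝ) volume volume := by
    rw [Measure.volume_eq_prod]
    exact Measure.measurePreserving_swap
  have hswap : ∫⁻ p in Sm, f p = ∫⁻ p in Sp, f p := by
    rw [← lintegral_indicator hSm_meas, ← lintegral_indicator hSp_meas]
    have hmeas : Measurable (Sm.indicator f) := hf_meas.indicator hSm_meas
    rw [← hmp.lintegral_comp hmeas]
    apply lintegral_congr
    intro p
    by_cases hp : p ∈ Sp
    · obtain ⟨hpS, h4⟩ := (hSp_mem p).1 hp
      obtain ⟨h1, h2, h3⟩ := (hS_mem p).1 hpS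
      have hmem : Prod.swap p ∈ Sm := by
        rw [hSm_mem]
        constructor
        · rw [hS_mem]
          exact ⟨h2, h1, by rwa [abs_sub_comm] at h3⟩
        · exact h4
      rw [indicator_of_mem hmem, indicator_of_mem hp, hf_eval, hf_eval]
      simp only [Prod.fst_swap, Prod.snd_swap]
      rw [abs_sub_comm]
    · have hmem : Prod.swap p ∉ Sm := by
        intro hc'
        obtain ⟨hpS, h4⟩ := (hSm_mem _).1 hc'
        obtain ⟨h1, h2, h3⟩ := (hS_mem _).1 hpS
        apply hp
        rw [hSp_mem]
        refine ⟨(hS_mem p).2 ⟨h2, h1, by rwa [abs_sub_comm] at h3⟩, h4⟩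
      rw [indicator_of_notMem hmem, indicator_of_notMem hp]
  -- main bound for Sp
  obtain ⟨a, ha_def⟩ : ∃ x : ℝ, x = (lam - 1) * β := ⟨_, rfl⟩
  have ha : 0 < a := ha_def ▸ mul_pos (by linarith) hβ
  obtain ⟨C, hC_def⟩ : ∃ x : ℝ, x = lam / (lam - 1) ^ 2 := ⟨_, rfl⟩
  have hCpos : 0 < C := hC_def ▸ div_pos (by linarith) (pow_pos (by linarith) 2)
  have hSp_bound : ∀ p : ℝ × ℝ, p ∈ Sp →
      a < p.1 ∧ p.1 ≤ 1 ∧ p.2 ∈ Icc (0:ℝ) (p.1 / lam) ∧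
        p.1 * (lam - 1) / lam ≤ |p.1 - p.2| := by
    intro p hp
    obtain ⟨hpS, hts⟩ := (hSp_mem p).1 hp
    obtain ⟨hs1, ht1, hgt⟩ := (hS_mem p).1 hpS
    have hgmono : g p.2 < g p.1 := hg_mono p.1 p.2 ht1.1 hts
    have habs : |g p.1 - g p.2| = g p.1 - g p.2 := abs_of_pos (by linarith)
    rw [habs] at hgt
    have hkey2 : lam * (p.2 + β) < p.1 + β := hkey p.1 p.2 ht1.1 hts hgt
    have h5 : lam * p.2 + a < p.1 := by
      rw [ha_def]; linarith [hkey2]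
    have hmul : 0 ≤ lam * p.2 := mul_nonneg (by linarith) ht1.1
    have ha1 : a < p.1 := by linarith
    have ht2 : p.2 ≤ p.1 / lam := by
      rw [le_div_iff₀ (by linarith : (0:ℝ) < lam)]
      linarith
    have hs0 : 0 < p.1 := lt_trans ha ha1
    have hts' : p.2 < p.1 := by
      calc p.2 ≤ p.1 / lam := ht2
        _ < p.1 := by
          rw [div_lt_iff₀ (by linarith : (0:ℝ) < lam)]
          nlinarith
    have hst : p.1 * (lam - 1) / lam ≤ |p.1 - p.2| := by
      rw [abs_of_pos (by linarith : (0:ℝ) < p.1 - p.2)]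
      rw [div_le_iff₀ (by linarith : (0:ℝ) < lam)]
      linarith
    exact ⟨ha1, hs1.2, ⟨ht1.1, ht2⟩, hst⟩
  have hmain : ∫⁻ p in Sp, f p ≤ ENNReal.ofReal (C * L) := by
    rw [← lintegral_indicator hSp_meas]
    rw [Measure.volume_eq_prod]
    rw [lintegral_prod _ ((hf_meas.indicator hSp_meas).aemeasurable)]
    -- inner bound
    have hinner : ∀ s : ℝ, (∫⁻ t, Sp.indicator f (s, t)) ≤
        (Icc a 1).indicator (fun s => ENNReal.ofReal (C * (1 / s))) s := by
      intro s
      by_cases hs : s ∈ Icc a 1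
      · rw [indicator_of_mem hs]
        have hs0 : 0 < s := lt_of_lt_of_le ha hs.1
        have hDnn : (0:ℝ) ≤ lam ^ 2 / ((lam - 1) ^ 2 * s ^ 2) := by positivity
        calc (∫⁻ t, Sp.indicator f (s, t))
            ≤ ∫⁻ t, (Icc (0:ℝ) (s / lam)).indicator
                (fun _ => ENNReal.ofReal (lam ^ 2 / ((lam - 1) ^ 2 * s ^ 2))) t := by
              apply lintegral_mono
              intro t
              show Sp.indicator f (s, t) ≤
                (Icc (0:ℝ) (s / lam)).indicator
                  (fun _ => ENNReal.ofReal (lam ^ 2 / ((lam - 1) ^ 2 * s ^ 2))) t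
              by_cases hst : (s, t) ∈ Sp
              · obtain ⟨_, _, ht2, habs⟩ := hSp_bound (s, t) hst
                rw [indicator_of_mem hst, indicator_of_mem ht2, hf_eval]
                apply ENNReal.ofReal_le_ofReal
                have hb1 : 0 < s * (lam - 1) / lam := by
                  apply div_pos (mul_pos hs0 (by linarith)) (by linarith)
                have hb2 : s * (lam - 1) / lam ≤ |s - t| := by
                  calc s * (lam - 1) / lam = s * (lam - 1) / lam := rfl
                    _ ≤ |(s, t).1 - (s, t).2| := habs
                have hb3 : (s * (lam - 1) / lam) ^ 2 ≤ |s - t| ^ 2 :=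
                  pow_le_pow_left₀ hb1.le hb2 2
                have hb4 : 1 / |s - t| ^ 2 ≤ 1 / (s * (lam - 1) / lam) ^ 2 :=
                  one_div_le_one_div_of_le (by positivity) hb3
                have hb5 : 1 / (s * (lam - 1) / lam) ^ 2 = lam ^ 2 / ((lam - 1) ^ 2 * s ^ 2) := by
                  field_simp
                rw [← hb5]
                exact hb4
              · rw [indicator_of_notMem hst]
                exact zero_le
          _ = ENNReal.ofReal (lam ^ 2 / ((lam - 1) ^ 2 * s ^ 2)) * volume (Icc (0:ℝ) (s / lam)) := by
              rw [lintegral_indicator_const measurableSet_Icc]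
          _ ≤ ENNReal.ofReal (C * (1 / s)) := by
              rw [Real.volume_Icc]
              rw [← ENNReal.ofReal_mul hDnn]
              apply ENNReal.ofReal_le_ofReal
              have heq : lam ^ 2 / ((lam - 1) ^ 2 * s ^ 2) * (s / lam - 0) = C * (1 / s) := by
                have hs' : s ≠ 0 := ne_of_gt hs0
                have hl1 : lam - 1 ≠ 0 := by linarith
                have hl0 : lam ≠ 0 := by linarith
                rw [hC_def]
                field_simp
                ring
              rw [heq]
      · rw [indicator_of_notMem hs]
        have hz : ∀ t : ℝ, Sp.indicator f (s, t) = 0 := by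
          intro t
          show Sp.indicator f (s, t) = 0
          apply indicator_of_notMem
          intro hst
          obtain ⟨h1, h2, _⟩ := hSp_bound (s, t) hst
          exact hs ⟨le_of_lt h1, h2⟩
        simp only [hz]
        rw [lintegral_zero]
    calc (∫⁻ s, ∫⁻ t, Sp.indicator f (s, t)) ≤
        ∫⁻ s, (Icc a 1).indicator (fun s => ENNReal.ofReal (C * (1 / s))) s :=
          lintegral_mono hinner
      _ = ∫⁻ s in Icc a 1, ENNReal.ofReal (C * (1 / s)) := by
          rw [lintegral_indicator measurableSet_Icc]
      _ ≤ ENNReal.ofReal (C * L) := by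
          by_cases ha1 : a ≤ 1
          · have hcont : ContinuousOn (fun s : ℝ => C * (1 / s)) (Icc a 1) := by
              apply ContinuousOn.mul continuousOn_const
              apply ContinuousOn.div continuousOn_const continuousOn_id
              intro x hx
              exact ne_of_gt (lt_of_lt_of_le ha hx.1)
            have hint : IntegrableOn (fun s : ℝ => C * (1 / s)) (Icc a 1) :=
              hcont.integrableOn_Icc
            have hnn : 0 ≤ᵐ[volume.restrict (Icc a 1)] fun s : ℝ => C * (1 / s) := by
              filter_upwards [ae_restrict_mem measurableSet_Icc] with x hx
              have hx0 : 0 < x := lt_of_lt_of_le ha hx.1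
              have : (0:ℝ) ≤ C * (1 / x) := by positivity
              exact this
            rw [← ofReal_integral_eq_lintegral_ofReal hint hnn]
            apply ENNReal.ofReal_le_ofReal
            rw [MeasureTheory.integral_const_mul]
            have h0m : (0:ℝ) ∉ uIcc a 1 := by
              rw [uIcc_of_le ha1]
              intro hmem
              exact absurd hmem.1 (not_le.2 ha)
            have hlog : ∫ s in Icc a 1, 1 / s = Real.log (1 / a) := by
              simp only [one_div]
              rw [integral_Icc_eq_integral_Ioc, ← intervalIntegral.integral_of_le ha1,
                _root_.integral_inv h0m, one_div]
            rw [hlog]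
            have hloga : Real.log (1 / a) ≤ L := by
              have hba : β ≤ a := by rw [ha_def]; nlinarith [hβ, hlam2]
              have h1b : 1 / β = Real.exp L - 1 := by rw [hβ_def]; field_simp
              have h1a : 1 / a ≤ Real.exp L := by
                calc 1 / a ≤ 1 / β := one_div_le_one_div_of_le hβ hba
                  _ = Real.exp L - 1 := h1b
                  _ ≤ Real.exp L := by linarith
              calc Real.log (1 / a) ≤ Real.log (Real.exp L) :=
                    Real.log_le_log (by positivity) h1a
                _ = L := Real.log_exp L
            exact mul_le_mul_of_nonneg_left hloga hCpos.le
          · rw [Icc_eq_empty ha1, Measure.restrict_empty, lintegral_zero_measure]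
            exact zero_le
  -- conclude
  rw [hsplit, hswap]
  have hfinal : ENNReal.ofReal (C * L) + ENNReal.ofReal (C * L) < ENNReal.ofReal ε := by
    rw [← ENNReal.ofReal_add (by positivity) (by positivity)]
    apply lt_of_le_of_lt (ENNReal.ofReal_le_ofReal _) ((ENNReal.ofReal_lt_ofReal_iff hε).2 hsmall)
    have hexp : Real.exp (-(k * L)) = 1 / lam := by
      rw [Real.exp_neg, hlam_def, one_div]
    rw [hexp, hC_def]
    have hq : lam / (lam - 1) ^ 2 ≤ 4 / lam := by
      rw [div_le_div_iff₀ (pow_pos (by linarith : (0:ℝ) < lam - 1) 2)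
        (by linarith : (0:ℝ) < lam)]
      nlinarith [sq_nonneg (lam - 2)]
    have hq2 := mul_le_mul_of_nonneg_right hq hL.le
    have h4 : 4 / lam * L + 4 / lam * L = 8 * L * (1 / lam) := by ring
    linarith
  calc (∫⁻ p in Sp, f p) + ∫⁻ p in Sp, f p
      ≤ ENNReal.ofReal (C * L) + ENNReal.ofReal (C * L) := add_le_add hmain hmain
    _ < ENNReal.ofReal ε := hfinal
end

section
/- Let δ > 0, let M ∈ ℕ with M > 100, and let φ : ℝ → ℝ be continuous with φ(x+1) = φ(x) + Mδ for all x ∈ ℝ. For k ∈ ℤ define E_k = {s ∈ [0,2] : kδ ≤ φ(s) ≤ (k+1)δ} and N_k = E_{k−1} ∪ E_k ∪ E_{k+1}. Suppose there exist m ∈ ℕ, indices k_1 < k_2 < ⋯ < k_m in ℤ, and positive lengths τ_1, …, τ_m ≤ 1 such that for each 1 ≤ i ≤ m: |E_{k_i} ∩ (1−τ_i, 1)| > 0.03·τ_i and |(0, τ_i) ∖ (E_{k_i−M−1} ∪ E_{k_i−M} ∪ E_{k_i−M+1})| > 0.03·τ_i. Then ∬_{{(s,t) ∈ [0,2]×[0,2]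 : |φ(s)−φ(t)| > δ}} ds dt / |s−t|² ≥ 10^{−6}·m. -/
/-!
Write `E_κ` for the band `{s ∈ [0,2] | κδ ≤ φ s ≤ (κ+1)δ}`. Scale `i` yields the rectangle
`R_i = (E_{k_i} ∩ (1-τ_i,1)) × (1 + ((0,τ_i) ∖ (E_{k_i-M-1} ∪ E_{k_i-M} ∪ E_{k_i-M+1})))` of area
`> (0.03 τ_i)²`. On its second factor `φ t = φ (t-1) + Mδ` avoids `[(k_i-1)δ, (k_i+2)δ]`, so `R_i`
lies in the integration region, and `|s-t| < 2τ_i` there, so `R_i` contributes at least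
`0.03² / 4 = 9/40000`. Since `k` is strictly increasing, scales whose indices differ by two have
disjoint bands `E_{k_i}`; every other scale gives `⌈m/2⌉` disjoint rectangles, and `9/80000 ≥ 10⁻⁶`.
-/

open MeasureTheory Set

def levelBand (φ : ℝ → ℝ) (δ : ℝ) (κ : ℤ) : Set ℝ :=
  {s ∈ Icc (0:ℝ) 2 | (κ : ℝ) * δ ≤ φ s ∧ φ s ≤ ((κ : ℝ) + 1) * δ}

lemma measurableSet_levelBand {φ : ℝ → ℝ} (hφ : Continuous φ) (δ : ℝ) (κ : ℤ) :
    MeasurableSet (levelBand φ δ κ) :=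
  measurableSet_Icc.inter <|
    (measurableSet_le measurable_const hφ.measurable).inter
      (measurableSet_le hφ.measurable measurable_const)

lemma disjoint_levelBand {φ : ℝ → ℝ} {δ : ℝ} (hδ : 0 < δ) {κ κ' : ℤ} (h : κ + 2 ≤ κ') :
    Disjoint (levelBand φ δ κ) (levelBand φ δ κ') := by
  have h' : (κ : ℝ) + 2 ≤ κ' := by exact_mod_cast h
  refine Set.disjoint_left.2 fun s ⟨_, _, hs⟩ ⟨_, hs', _⟩ => ?_
  nlinarith

lemma lt_or_lt_of_notMem_levelBand_union {φ : ℝ → ℝ} {δ : ℝ} {κ : ℤ} {u : ℝ}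
    (hu : u ∈ Icc (0:ℝ) 2)
    (h : u ∉ levelBand φ δ (κ - 1) ∪ levelBand φ δ κ ∪ levelBand φ δ (κ + 1)) :
    φ u < ((κ : ℝ) - 1) * δ ∨ ((κ : ℝ) + 2) * δ < φ u := by
  simp only [levelBand, mem_union, mem_sep_iff, not_or, not_and, not_le] at h
  obtain ⟨⟨h₁, h₂⟩, h₃⟩ := h
  push_cast at h₁ h₂ h₃
  by_contra! H
  have h₁' := h₁ hu H.1
  have h₂' := h₂ hu (by linarith)
  linarith [h₃ hu h₂'.le]

def scaleRect (φ : ℝ → ℝ) (δ : ℝ) (M : ℕ) (κ : ℤ) (τ : ℝ) : Set (ℝ × ℝ) :=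
  (levelBand φ δ κ ∩ Ioo (1 - τ) 1) ×ˢ ((· - 1) ⁻¹' (Ioo 0 τ \
    (levelBand φ δ (κ - M - 1) ∪ levelBand φ δ (κ - M) ∪ levelBand φ δ (κ - M + 1))))

lemma measurableSet_scaleRect {φ : ℝ → ℝ} (hφ : Continuous φ) (δ : ℝ) (M : ℕ) (κ : ℤ)
    (τ : ℝ) : MeasurableSet (scaleRect φ δ M κ τ) := by
  have hE := measurableSet_levelBand hφ δ
  exact ((hE κ).inter measurableSet_Ioo).prod <|
    (measurableSet_Ioo.diff (((hE _).union (hE _)).union (hE _))).preimage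
      (measurable_sub_const 1)

lemma scaleRect_subset {φ : ℝ → ℝ} {δ : ℝ} {M : ℕ}
    (hper : ∀ x : ℝ, φ (x + 1) = φ x + (M : ℝ) * δ) (κ : ℤ) {τ : ℝ} (hτ : τ ≤ 1) :
    scaleRect φ δ M κ τ ⊆
      {p : ℝ × ℝ | p.1 ∈ Icc (0:ℝ) 2 ∧ p.2 ∈ Icc (0:ℝ) 2 ∧ δ < |φ p.1 - φ p.2|} := by
  rintro ⟨s, t⟩ ⟨⟨⟨hs, hκ₁, hκ₂⟩, -⟩, ⟨ht₁, ht₂⟩, hout⟩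
  have hφt : φ t = φ (t - 1) + M * δ := by simpa using hper (t - 1)
  have hsep := lt_or_lt_of_notMem_levelBand_union (κ := κ - M)
    ⟨ht₁.le, by linarith⟩ hout
  push_cast at hsep
  refine ⟨hs, ⟨by linarith, by linarith⟩, ?_⟩
  rcases hsep with hlow | hhigh
  · exact (le_abs_self _).trans_lt' (by rw [hφt]; linarith)
  · exact (neg_le_abs _).trans_lt' (by rw [hφt]; linarith)

lemma disjoint_scaleRect {φ : ℝ → ℝ} {δ : ℝ} (hδ : 0 < δ) (M : ℕ) {κ κ' : ℤ} (h : κ + 2 ≤ κ')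
    (τ τ' : ℝ) : Disjoint (scaleRect φ δ M κ τ) (scaleRect φ δ M κ' τ') :=
  ((disjoint_levelBand hδ h).mono inter_subset_left inter_subset_left).set_prod_left _ _

lemma volume_preimage_sub_const (D : Set ℝ) (a : ℝ) : volume ((· - a) ⁻¹' D) = volume D := by
  simpa only [sub_eq_add_neg] using measure_preimage_add_right volume (-a) D

lemma le_setLIntegral_inv_sq_prod {A B : Set ℝ} (hAB : MeasurableSet (A ×ˢ B)) {c r : ℝ} (hAc : A ⊆ Ioo (c - r) c) (hBc : B ⊆ Ioo c (c + r)) :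
    ENNReal.ofReal (1 / (2 * r) ^ 2) * (volume A * volume B) ≤
      ∫⁻ p in A ×ˢ B, ENNReal.ofReal (1 / |p.1 - p.2| ^ 2) := by
  have hpt : ∀ p ∈ A ×ˢ B,
      ENNReal.ofReal (1 / (2 * r) ^ 2) ≤ ENNReal.ofReal (1 / |p.1 - p.2| ^ 2) := by
    rintro ⟨s, t⟩ ⟨hs, ht⟩
    dsimp only at hs ht ⊢
    obtain ⟨hs₁, hs₂⟩ := hAc hs
    obtain ⟨ht₁, ht₂⟩ := hBc ht
    have hts : 0 < t - s := by linarith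
    rw [abs_sub_comm, abs_of_pos hts]
    gcongr
    linarith
  calc ENNReal.ofReal (1 / (2 * r) ^ 2) * (volume A * volume B)
      = ∫⁻ _ in A ×ˢ B, ENNReal.ofReal (1 / (2 * r) ^ 2) := by
        rw [setLIntegral_const, Measure.volume_eq_prod, Measure.prod_prod, mul_comm]
    _ ≤ _ := setLIntegral_mono' hAB hpt

lemma ofReal_le_setLIntegral_scaleRect {φ : ℝ → ℝ} (hφ : Continuous φ) (δ : ℝ) (M : ℕ)
    (κ : ℤ) {τ : ℝ} (hτ : 0 < τ)
    (hfull : (volume (levelBand φ δ κ ∩ Ioo (1 - τ) 1)).toReal > 0.03 * τ)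
    (hempty : (volume (Ioo 0 τ \ (levelBand φ δ (κ - M - 1) ∪ levelBand φ δ (κ - M) ∪
      levelBand φ δ (κ - M + 1)))).toReal > 0.03 * τ) :
    ENNReal.ofReal (9 / 40000) ≤
      ∫⁻ p in scaleRect φ δ M κ τ, ENNReal.ofReal (1 / |p.1 - p.2| ^ 2) := by
  refine le_trans ?_ (le_setLIntegral_inv_sq_prod (c := 1) (r := τ)
    (measurableSet_scaleRect hφ δ M κ τ) inter_subset_right fun t ht => ⟨by linarith [ht.1.1], by linarith [ht.1.2]⟩)
  rw [volume_preimage_sub_const]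
  calc ENNReal.ofReal (9 / 40000)
      = ENNReal.ofReal (1 / (2 * τ) ^ 2) *
          (ENNReal.ofReal (0.03 * τ) * ENNReal.ofReal (0.03 * τ)) := by
        rw [← ENNReal.ofReal_mul (by positivity), ← ENNReal.ofReal_mul (by positivity)]
        congr 1
        field_simp
        norm_num
    _ ≤ _ := by
        gcongr
        · exact ENNReal.ofReal_le_of_le_toReal hfull.le
        · exact ENNReal.ofReal_le_of_le_toReal hempty.le

lemma exists_finset_sep_two (m : ℕ) :
    ∃ I : Finset ℕ, (∀ i ∈ I, 1 ≤ i ∧ i ≤ m) ∧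
      (I : Set ℕ).Pairwise (fun i j => i + 2 ≤ j ∨ j + 2 ≤ i) ∧ m ≤ 2 * I.card := by
  refine ⟨(Finset.range ((m + 1) / 2)).image (2 * · + 1), ?_, ?_, ?_⟩
  · simp only [Finset.mem_image, Finset.mem_range]
    rintro _ ⟨j, hj, rfl⟩
    omega
  · simp only [Finset.coe_image, Finset.coe_range]
    rintro _ ⟨a, -, rfl⟩ _ ⟨b, -, rfl⟩ hab
    dsimp only at hab ⊢
    omega
  · rw [Finset.card_image_of_injective _ fun a b h => by omega, Finset.card_range]
    omega

lemma add_le_add_of_lt_succ {k : ℕ → ℤ} {m : ℕ} (hmono : ∀ i, 1 ≤ i → i < m → k i < k (i + 1))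
    {i j : ℕ} (hi : 1 ≤ i) (hij : i ≤ j) (hj : j ≤ m) : k i + j ≤ k j + i := by
  induction j, hij using Nat.le_induction with
  | base => rfl
  | succ j hij ih =>
    have := hmono j (by omega) (by omega)
    push_cast
    linarith [ih (by omega)]

theorem stmt13_general (δ : ℝ) (hδ : 0 < δ) (M : ℕ) (φ : ℝ → ℝ)
    (hφ : Continuous φ) (hper : ∀ x : ℝ, φ (x + 1) = φ x + (M : ℝ) * δ)
    (m : ℕ) (k : ℕ → ℤ) (τ : ℕ → ℝ)
    (hmono : ∀ i, 1 ≤ i → i < m → k i < k (i + 1))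
    (hτ : ∀ i, 1 ≤ i → i ≤ m → 0 < τ i ∧ τ i ≤ 1)
    (hfull : ∀ i, 1 ≤ i → i ≤ m →
      (volume ({s ∈ Icc (0:ℝ) 2 | (k i : ℝ) * δ ≤ φ s ∧ φ s ≤ ((k i : ℝ) + 1) * δ} ∩
        Ioo (1 - τ i) 1)).toReal > 0.03 * τ i)
    (hempty : ∀ i, 1 ≤ i → i ≤ m →
      (volume (Ioo (0:ℝ) (τ i) \
        ({s ∈ Icc (0:ℝ) 2 | ((k i - M - 1 : ℤ) : ℝ) * δ ≤ φ s ∧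
            φ s ≤ (((k i - M - 1 : ℤ) : ℝ) + 1) * δ} ∪
         {s ∈ Icc (0:ℝ) 2 | ((k i - M : ℤ) : ℝ) * δ ≤ φ s ∧
            φ s ≤ (((k i - M : ℤ) : ℝ) + 1) * δ} ∪
         {s ∈ Icc (0:ℝ) 2 | ((k i - M + 1 : ℤ) : ℝ) * δ ≤ φ s ∧
            φ s ≤ (((k i - M + 1 : ℤ) : ℝ) + 1) * δ}))).toReal > 0.03 * τ i) :
    ENNReal.ofReal ((10 : ℝ) ^ (-6 : ℤ) * m) ≤
      ∫⁻ p in {p : ℝ × ℝ | p.1 ∈ Icc (0:ℝ) 2 ∧ p.2 ∈ Icc (0:ℝ) 2 ∧ δ < |φ p.1 - φ p.2|},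
        ENNReal.ofReal (1 / |p.1 - p.2| ^ 2) := by
  obtain ⟨I, hI, hsep, hcard⟩ := exists_finset_sep_two m
  have hdisj : (I : Set ℕ).PairwiseDisjoint fun i => scaleRect φ δ M (k i) (τ i) := by
    intro i hi j hj hij
    have hk : ∀ {i j}, i ∈ I → j ∈ I → i + 2 ≤ j → k i + 2 ≤ k j := fun hi hj h => by
      linarith [add_le_add_of_lt_succ hmono (hI _ hi).1 (by omega : _ ≤ _) (hI _ hj).2]
    rcases hsep hi hj hij with h | h
    · exact disjoint_scaleRect hδ M (hk hi hj h) _ _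
    · exact (disjoint_scaleRect hδ M (hk hj hi h) _ _).symm
  have hcard' : (m : ℝ) ≤ 2 * I.card := by exact_mod_cast hcard
  calc ENNReal.ofReal ((10 : ℝ) ^ (-6 : ℤ) * m)
      ≤ ∑ _i ∈ I, ENNReal.ofReal (9 / 40000) := by
        rw [Finset.sum_const, nsmul_eq_mul, ← ENNReal.ofReal_natCast,
          ← ENNReal.ofReal_mul (by positivity)]
        exact ENNReal.ofReal_le_ofReal (by norm_num; linarith)
    _ ≤ ∑ i ∈ I, ∫⁻ p in scaleRect φ δ M (k i) (τ i), ENNReal.ofReal (1 / |p.1 - p.2| ^ 2) :=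
        Finset.sum_le_sum fun i hi => ofReal_le_setLIntegral_scaleRect hφ δ M (k i)
          (hτ i (hI i hi).1 (hI i hi).2).1 (hfull i (hI i hi).1 (hI i hi).2)
          (hempty i (hI i hi).1 (hI i hi).2)
    _ = ∫⁻ p in ⋃ i ∈ I, scaleRect φ δ M (k i) (τ i), ENNReal.ofReal (1 / |p.1 - p.2| ^ 2) :=
        (lintegral_biUnion_finset hdisj (fun i _ => measurableSet_scaleRect hφ δ M _ _) _).symm
    _ ≤ _ := lintegral_mono_set <| iUnion₂_subset fun i hi =>
        scaleRect_subset hper (k i) (hτ i (hI i hi).1 (hI i hi).2).2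

/-- Each scale of a logarithmic singularity contributes `10⁻⁶` to the nonlocal integral of a
periodic phase function: if `φ` is continuous with `φ(x+1) = φ(x) + Mδ`, and, writing
`E_k = {s ∈ [0,2] | kδ ≤ φ(s) ≤ (k+1)δ}`, there are indices `k_1 < ⋯ < k_m` and lengths
`0 < τ_i ≤ 1` with `|E_{k_i} ∩ (1-τ_i,1)| > 0.03 τ_i` and
`|(0,τ_i) ∖ (E_{k_i-M-1} ∪ E_{k_i-M} ∪ E_{k_i-M+1})| > 0.03 τ_i`, then
`∬_{s,t ∈ [0,2], |φ(s)-φ(t)| > δ} ds dt / |s-t|² ≥ 10⁻⁶ m`. -/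
theorem stmt13 (δ : ℝ) (hδ : 0 < δ) (M : ℕ) (hM : 100 < M) (φ : ℝ → ℝ)
    (hφ : Continuous φ) (hper : ∀ x : ℝ, φ (x + 1) = φ x + (M : ℝ) * δ)
    (m : ℕ) (k : ℕ → ℤ) (τ : ℕ → ℝ)
    (hmono : ∀ i, 1 ≤ i → i < m → k i < k (i + 1))
    (hτ : ∀ i, 1 ≤ i → i ≤ m → 0 < τ i ∧ τ i ≤ 1)
    (hfull : ∀ i, 1 ≤ i → i ≤ m →
      (volume ({s ∈ Icc (0:ℝ) 2 | (k i : ℝ) * δ ≤ φ s ∧ φ s ≤ ((k i : ℝ) + 1) * δ} ∩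
        Ioo (1 - τ i) 1)).toReal > 0.03 * τ i)
    (hempty : ∀ i, 1 ≤ i → i ≤ m →
      (volume (Ioo (0:ℝ) (τ i) \
        ({s ∈ Icc (0:ℝ) 2 | ((k i - M - 1 : ℤ) : ℝ) * δ ≤ φ s ∧
            φ s ≤ (((k i - M - 1 : ℤ) : ℝ) + 1) * δ} ∪
         {s ∈ Icc (0:ℝ) 2 | ((k i - M : ℤ) : ℝ) * δ ≤ φ s ∧
            φ s ≤ (((k i - M : ℤ) : ℝ) + 1) * δ} ∪
         {s ∈ Icc (0:ℝ) 2 | ((k i - M + 1 : ℤ) : ℝ) * δ ≤ φ s ∧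
            φ s ≤ (((k i - M + 1 : ℤ) : ℝ) + 1) * δ}))).toReal > 0.03 * τ i) :
    ENNReal.ofReal ((10 : ℝ) ^ (-6 : ℤ) * m) ≤
      ∫⁻ p in {p : ℝ × ℝ | p.1 ∈ Icc (0:ℝ) 2 ∧ p.2 ∈ Icc (0:ℝ) 2 ∧ δ < |φ p.1 - φ p.2|},
        ENNReal.ofReal (1 / |p.1 - p.2| ^ 2) :=
  stmt13_general δ hδ M φ hφ hper m k τ hmono hτ hfull hempty
end
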